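/- Let n be a positive integer. There exists a ±1 vector u : ZMod n → ℝ generating a circulant Hadamard matrix if and only if the circulant system admits a solution M : (ZMod n → ZMod 2) → ℝ that is not identically zero. Equivalently, the circulant Hadamard conjecture holds for n (no such vector u exists) if and only if the only solution M of the circulant system is M ≡ 0. -/

import Mathlib

/-- `u` generates a circulant Hadamard matrix: all entries are `±1` and all
non-trivial cyclic autocorrelations vanish. -/
def GeneratesCircHadamard (n : ℕ) [NeZero n] (u : ZMod n → ℝ) : Prop :=
  (∀ j, u j = 1 ∨ u j = -1) ∧
    ∀ d : ℕ, 1 ≤ d → d ≤ n - 1 → ∑ j : ZMod n, u j * u (j + (d : ZMod n)) = 0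

/-- `π_j`, the indicator character of `{j}`. -/
def piChar (n : ℕ) (j : ZMod n) : ZMod n → ZMod 2 :=
  fun i => if i = j then 1 else 0

/-- The circulant system of homogeneous linear equations for
`M : (ZMod n → ZMod 2) → ℝ`: for every character `γ` and every
`1 ≤ d ≤ ⌊n/2⌋`, `∑_j M(γ + π_j + π_{j+d}) = 0`. -/
def CirculantSystem (n : ℕ) [NeZero n] (M : (ZMod n → ZMod 2) → ℝ) : Prop :=
  ∀ γ : ZMod n → ZMod 2, ∀ d : ℕ, 1 ≤ d → d ≤ n / 2 →
    ∑ j : ZMod n, M (γ + piChar n j + piChar n (j + (d : ZMod n))) = 0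

/-!
The Walsh characters `χ_ε(γ) = (-1)^(ε ⬝ᵥ γ)` of `(ZMod 2)^n` diagonalise the shifts
`γ ↦ γ + π_j + π_{j+d}`: with `u = (-1)^ε`, the Walsh transform of the left-hand side of the
equation `(γ, d)`, taken at `ε`, is the autocorrelation of `u` at `d` times `M̂(ε)`. Hence `χ_ε`
solves the system when `u` generates a circulant Hadamard matrix, and conversely a nonzero
solution has `M̂(ε) ≠ 0` for some `ε` (characters are linearly independent), which forces the
autocorrelations of `u` at `1 ≤ d ≤ n/2`, and by the symmetry `d ↔ n - d` at all `d ≠ 0`, to vanish.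
-/

open Finset

noncomputable def signChar : AddChar (ZMod 2) ℝ :=
  AddChar.zmodChar 2 (by norm_num : (-1 : ℝ) ^ 2 = 1)

lemma signChar_zero : signChar 0 = 1 := AddChar.map_zero_eq_one _

lemma signChar_one : signChar 1 = -1 := by
  simp [signChar, AddChar.zmodChar_apply, ZMod.val_one]

lemma signChar_eq_one_or_neg_one (a : ZMod 2) : signChar a = 1 ∨ signChar a = -1 := by
  fin_cases a
  · exact .inl signChar_zero
  · exact .inr signChar_one

lemma signChar_injective : Function.Injective signChar := by
  have h01 : signChar 0 ≠ signChar 1 := by norm_num [signChar_zero, signChar_one]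
  intro a b h
  fin_cases a <;> fin_cases b
  exacts [rfl, absurd h h01, absurd h.symm h01, rfl]

lemma exists_signChar_eq {x : ℝ} (hx : x = 1 ∨ x = -1) : ∃ a, signChar a = x := by
  rcases hx with rfl | rfl
  exacts [⟨0, signChar_zero⟩, ⟨1, signChar_one⟩]

section Walsh

variable {ι : Type*} [Fintype ι]

noncomputable def walshChar (ε : ι → ZMod 2) : AddChar (ι → ZMod 2) ℝ where
  toFun γ := signChar (ε ⬝ᵥ γ)
  map_zero_eq_one' := by simp
  map_add_eq_mul' γ δ := by rw [dotProduct_add, AddChar.map_add_eq_mul]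

lemma walshChar_apply (ε γ : ι → ZMod 2) : walshChar ε γ = signChar (ε ⬝ᵥ γ) := rfl

lemma walshChar_comm (ε γ : ι → ZMod 2) : walshChar ε γ = walshChar γ ε := by
  rw [walshChar_apply, walshChar_apply, dotProduct_comm]

lemma walshChar_single [DecidableEq ι] (ε : ι → ZMod 2) (j : ι) :
    walshChar ε (Pi.single j 1) = signChar (ε j) := by
  rw [walshChar_apply, dotProduct_single, mul_one]

lemma walshChar_neg (ε s : ι → ZMod 2) : walshChar ε (-s) = walshChar ε s := by
  rw [show -s = s from funext fun i => ZMod.neg_eq_self_mod_two (s i)]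

lemma walshChar_injective [DecidableEq ι] :
    Function.Injective (walshChar : (ι → ZMod 2) → AddChar _ ℝ) := by
  intro ε ε' h
  funext j
  apply signChar_injective
  rw [← walshChar_single, ← walshChar_single, h]

lemma eq_zero_of_forall_sum_mul_walshChar_eq_zero [DecidableEq ι] (M : (ι → ZMod 2) → ℝ)
    (h : ∀ ε, ∑ γ, M γ * walshChar ε γ = 0) : M = 0 := by
  have hli : LinearIndependent ℝ fun γ : ι → ZMod 2 => ⇑(walshChar γ) :=
    (AddChar.linearIndependent _ ℝ).comp _ walshChar_injective
  refine funext (Fintype.linearIndependent_iff.mp hli M (funext fun ε => ?_))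
  simpa [walshChar_comm, mul_comm] using h ε

end Walsh

section Autocorrelation

variable {G R : Type*} [AddCommGroup G] [Fintype G] [CommSemiring R]

def autocorr (u : G → R) (c : G) : R := ∑ j, u j * u (j + c)

lemma autocorr_neg (u : G → R) (c : G) : autocorr u (-c) = autocorr u c := by
  refine Fintype.sum_equiv (Equiv.addRight (-c)) _ _ fun j => ?_
  simp only [Equiv.coe_addRight, neg_add_cancel_right, mul_comm]

lemma sum_comp_add_mul_addChar (ψ : AddChar G R) (M : G → R) (s : G) :
    ∑ g, M (g + s) * ψ g = ψ (-s) * ∑ g, M g * ψ g := by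
  rw [mul_sum]
  refine Fintype.sum_equiv (Equiv.addRight s) _ _ fun g => ?_
  simp only [Equiv.coe_addRight]
  rw [show ψ g = ψ (g + s) * ψ (-s) by rw [← AddChar.map_add_eq_mul, add_neg_cancel_right]]
  ring

end Autocorrelation

lemma piChar_eq_single {n : ℕ} (j : ZMod n) : piChar n j = Pi.single j 1 := by
  funext i
  simp [piChar, Pi.single_apply]

section Circulant

variable {n : ℕ} [NeZero n]

lemma walshChar_piChar_add_piChar (ε : ZMod n → ZMod 2) (j c : ZMod n) :
    walshChar ε (piChar n j + piChar n (j + c)) = signChar (ε j) * signChar (ε (j + c)) := by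
  rw [AddChar.map_add_eq_mul, piChar_eq_single, piChar_eq_single, walshChar_single,
    walshChar_single]

lemma generatesCircHadamard_iff (u : ZMod n → ℝ) :
    GeneratesCircHadamard n u ↔ (∀ j, u j = 1 ∨ u j = -1) ∧
      ∀ d : ℕ, 1 ≤ d → d ≤ n / 2 → autocorr u (d : ZMod n) = 0 := by
  refine and_congr_right fun _ => ⟨fun h d hd1 hd2 => h d hd1 (by omega), fun h d hd1 hd2 => ?_⟩
  rcases le_or_gt d (n / 2) with hd | hd
  · exact h d hd1 hd
  · have hcast : ((n - d : ℕ) : ZMod n) = -d := by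
      rw [Nat.cast_sub (by omega), ZMod.natCast_self, zero_sub]
    show autocorr u d = 0
    rw [← autocorr_neg, ← hcast]
    exact h (n - d) (by omega) (by omega)

lemma circulantSystem_walshChar (ε : ZMod n → ZMod 2)
    (h : ∀ d : ℕ, 1 ≤ d → d ≤ n / 2 → autocorr (signChar ∘ ε) (d : ZMod n) = 0) :
    CirculantSystem n (walshChar ε) := by
  intro γ d hd1 hd2
  simp_rw [add_assoc γ, AddChar.map_add_eq_mul _ γ, walshChar_piChar_add_piChar, ← mul_sum]
  exact mul_eq_zero_of_right _ (h d hd1 hd2)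

lemma autocorr_mul_sum_mul_walshChar_eq_zero {M : (ZMod n → ZMod 2) → ℝ}
    (hM : CirculantSystem n M) (ε : ZMod n → ZMod 2) {d : ℕ} (hd1 : 1 ≤ d) (hd2 : d ≤ n / 2) :
    autocorr (signChar ∘ ε) (d : ZMod n) * ∑ γ, M γ * walshChar ε γ = 0 := by
  have shift (j : ZMod n) : ∑ γ, M (γ + piChar n j + piChar n (j + d)) * walshChar ε γ
      = signChar (ε j) * signChar (ε (j + d)) * ∑ γ, M γ * walshChar ε γ := by
    simp_rw [add_assoc _ (piChar n j)]
    rw [sum_comp_add_mul_addChar, walshChar_neg, walshChar_piChar_add_piChar]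
  calc autocorr (signChar ∘ ε) (d : ZMod n) * ∑ γ, M γ * walshChar ε γ
      = ∑ j, ∑ γ, M (γ + piChar n j + piChar n (j + d)) * walshChar ε γ := by
        simp only [autocorr, Function.comp_apply, sum_mul, shift]
    _ = ∑ γ, (∑ j, M (γ + piChar n j + piChar n (j + d))) * walshChar ε γ := by
        rw [sum_comm]
        simp only [sum_mul]
    _ = 0 := by simp [hM _ d hd1 hd2]

end Circulant

/-- A circulant Hadamard matrix of order `n` exists if and only if the
circulant system admits a solution which is not identically zero;
equivalently, no circulant Hadamard matrix of order `n` exists if and only if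
the only solution of the circulant system is the zero function. -/
theorem exists_circHadamard_iff_exists_nontrivial_solution
    (n : ℕ) [NeZero n] :
    ((∃ u : ZMod n → ℝ, GeneratesCircHadamard n u) ↔
        ∃ M : (ZMod n → ZMod 2) → ℝ, M ≠ 0 ∧ CirculantSystem n M) ∧
      ((¬ ∃ u : ZMod n → ℝ, GeneratesCircHadamard n u) ↔
        ∀ M : (ZMod n → ZMod 2) → ℝ, CirculantSystem n M → M = 0) := by
  have main : (∃ u : ZMod n → ℝ, GeneratesCircHadamard n u) ↔
      ∃ M : (ZMod n → ZMod 2) → ℝ, M ≠ 0 ∧ CirculantSystem n M := by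
    simp_rw [generatesCircHadamard_iff]
    constructor
    · rintro ⟨u, hu, hcorr⟩
      choose ε hε using fun j => exists_signChar_eq (hu j)
      obtain rfl : signChar ∘ ε = u := funext hε
      refine ⟨walshChar ε, fun h => ?_, circulantSystem_walshChar ε hcorr⟩
      simpa using congr_fun h 0
    · rintro ⟨M, hM0, hM⟩
      obtain ⟨ε, hε⟩ : ∃ ε, ∑ γ, M γ * walshChar ε γ ≠ 0 := by
        by_contra! h
        exact hM0 (eq_zero_of_forall_sum_mul_walshChar_eq_zero M h)
      refine ⟨signChar ∘ ε, fun j => signChar_eq_one_or_neg_one _, fun d hd1 hd2 => ?_⟩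
      exact (mul_eq_zero.mp (autocorr_mul_sum_mul_walshChar_eq_zero hM ε hd1 hd2)).resolve_right hε
  refine ⟨main, ?_⟩
  rw [main]
  exact ⟨fun h M hM => by_contra fun h0 => h ⟨M, h0, hM⟩, fun h ⟨M, h0, hM⟩ => h0 (h M hM)⟩
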